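/- Let K be a commutative ring, P a finite poset, and x < z in P such that every y with x < y < z satisfies: y covers x and z covers y. Then Σ_{x<y<z} b_y^z∘b_x^y = −(d∘b_x^z + b_x^z∘d) as maps C^n(x) → C^{n+2}(z) for every n; in particular the morphism of complexes Σ_{x<y<z} b_y^z∘b_x^y : C^•(x) → C^{•+2}(z) is chain homotopic to zero. -/

import Mathlib

open Finsupp

/-- A strictly increasing chain of `n + 1` elements of `P` ending at `x`;
this models the chains `[x₁ < ⋯ < x_{n+1} = x]` of length `n + 1`. -/
def PChain (P : Type*) [PartialOrder P] (n : ℕ) (x : P) : Type _ :=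
  {f : Fin (n + 1) → P // StrictMono f ∧ f (Fin.last n) = x}

/-- `CC K P n x` is the free `K`-module on chains of `n + 1` elements ending at `x`;
it models the module `C_{n+1}(x)` of the paper. -/
abbrev CC (K : Type*) [CommRing K] (P : Type*) [PartialOrder P] (n : ℕ) (x : P) :=
  PChain P n x →₀ K

namespace PChain

variable {P : Type*} [PartialOrder P]

/-- Remove the entry at position `i` of a chain (never the last position). -/
def remove {n : ℕ} {x : P} (f : PChain P (n + 1) x) (i : Fin (n + 1)) : PChain P n x :=
  ⟨f.1 ∘ (Fin.castSucc i).succAbove, f.2.1.comp (Fin.strictMono_succAbove _), by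
    have h : (Fin.castSucc i).succAbove (Fin.last n) = Fin.last (n + 1) := by
      rw [Fin.succAbove_of_le_castSucc _ _
        (Fin.castSucc_le_castSucc_iff.mpr (Fin.le_last i))]
      exact Fin.succ_last n
    show f.1 _ = x
    rw [h, f.2.2]⟩

/-- Prepend an element `a` below the first entry of a chain. -/
def prepend {n : ℕ} {x : P} (f : PChain P n x) (a : P) (h : a < f.1 0) :
    PChain P (n + 1) x := by
  refine ⟨Fin.cons a f.1, ?_, ?_⟩
  · rw [Fin.strictMono_iff_lt_succ]
    intro i
    refine Fin.cases ?_ (fun j => ?_) i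
    · simpa using h
    · rw [← Fin.succ_castSucc, Fin.cons_succ, Fin.cons_succ]
      exact f.2.1 (Fin.castSucc_lt_succ : Fin.castSucc j < j.succ)
  · exact f.2.2

/-- Drop the last entry of a chain, whose second-to-last entry is `x`. -/
def truncate {n : ℕ} {y : P} (f : PChain P (n + 1) y) {x : P}
    (h : f.1 (Fin.castSucc (Fin.last n)) = x) : PChain P n x :=
  ⟨f.1 ∘ Fin.castSucc, f.2.1.comp Fin.strictMono_castSucc, h⟩

/-- Drop the last two entries of a chain, whose third-to-last entry is `x`. -/
def truncate2 {n : ℕ} {y : P} (f : PChain P (n + 2) y) {x : P}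
    (h : f.1 ((Fin.last n).castSucc.castSucc) = x) : PChain P n x :=
  ⟨f.1 ∘ fun i => (Fin.castSucc (Fin.castSucc i)),
    f.2.1.comp (Fin.strictMono_castSucc.comp Fin.strictMono_castSucc), h⟩

end PChain

/-- The boundary map `∂ : C_{n+2}(x) → C_{n+1}(x)`. -/
noncomputable def bdry (K : Type*) [CommRing K] {P : Type*} [PartialOrder P] (n : ℕ) (x : P) :
    CC K P (n + 1) x →ₗ[K] CC K P n x :=
  Finsupp.lsum K fun f => LinearMap.toSpanSingleton K (CC K P n x)
    (∑ i : Fin (n + 1), ((-1 : K) ^ (i : ℕ)) • Finsupp.single (f.remove i) (1 : K))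

open Classical in
/-- The contracting homotopy `c`, prepending the least element `a`. -/
noncomputable def contra (K : Type*) [CommRing K] {P : Type*} [PartialOrder P] (a : P)
    (n : ℕ) (x : P) : CC K P n x →ₗ[K] CC K P (n + 1) x :=
  Finsupp.lsum K fun f => LinearMap.toSpanSingleton K (CC K P (n + 1) x)
    (if h : a < f.1 0 then Finsupp.single (f.prepend a h) (1 : K) else 0)

open Classical in
/-- The connecting map `b_x^y : C_{n+2}(y) → C_{n+1}(x)`. -/
noncomputable def bmap (K : Type*) [CommRing K] {P : Type*} [PartialOrder P] (x y : P)
    (n : ℕ) : CC K P (n + 1) y →ₗ[K] CC K P n x :=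
  Finsupp.lsum K fun f => LinearMap.toSpanSingleton K (CC K P n x)
    (if h : f.1 (Fin.castSucc (Fin.last n)) = x then
      ((-1 : K) ^ (n + 1)) • Finsupp.single (f.truncate h) (1 : K)
    else 0)

section Aux

open Fin Finsupp PChain

variable {K : Type*} [CommRing K] {P : Type*} [PartialOrder P]

lemma bmap_single_pos (x y : P) (n : ℕ) (f : PChain P (n + 1) y)
    (h : f.1 (Fin.castSucc (Fin.last n)) = x) :
    bmap K x y n (Finsupp.single f 1) =
      ((-1 : K) ^ (n + 1)) • Finsupp.single (f.truncate h) 1 := by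
  classical
  rw [bmap, Finsupp.lsum_single, LinearMap.toSpanSingleton_apply, one_smul, dif_pos h]

lemma bmap_single_neg (x y : P) (n : ℕ) (f : PChain P (n + 1) y)
    (h : ¬ f.1 (Fin.castSucc (Fin.last n)) = x) :
    bmap K x y n (Finsupp.single f 1) = 0 := by
  classical
  rw [bmap, Finsupp.lsum_single, LinearMap.toSpanSingleton_apply, one_smul, dif_neg h]

lemma bdry_single (n : ℕ) (x : P) (f : PChain P (n + 1) x) :
    bdry K n x (Finsupp.single f 1) =
      ∑ i : Fin (n + 1), ((-1 : K) ^ (i : ℕ)) • Finsupp.single (f.remove i) 1 := by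
  rw [bdry, Finsupp.lsum_single, LinearMap.toSpanSingleton_apply, one_smul]

lemma succAbove_last_castSucc {n : ℕ} (j : Fin (n + 1)) :
    (Fin.castSucc (Fin.last (n + 1))).succAbove (Fin.castSucc j) =
      Fin.castSucc (Fin.castSucc j) :=
  Fin.succAbove_of_castSucc_lt _ _
    (Fin.castSucc_lt_castSucc_iff.mpr (Fin.castSucc_lt_last j))

lemma remove_last_cond {n : ℕ} {z : P} (f : PChain P (n + 2) z) :
    (f.remove (Fin.last (n + 1))).1 (Fin.castSucc (Fin.last n)) =
      f.1 ((Fin.last n).castSucc.castSucc) :=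
  congrArg f.1 (succAbove_last_castSucc (Fin.last n))

lemma remove_last_trunc {n : ℕ} {z x : P} (f : PChain P (n + 2) z)
    (h : f.1 ((Fin.last n).castSucc.castSucc) = x) :
    (f.remove (Fin.last (n + 1))).truncate ((remove_last_cond f).trans h) =
      f.truncate2 h :=
  Subtype.ext (funext fun j => congrArg f.1 (succAbove_last_castSucc j))

lemma trunc_trunc {n : ℕ} {z w x : P} (f : PChain P (n + 2) z)
    (h2 : f.1 (Fin.castSucc (Fin.last (n + 1))) = w)
    (h : f.1 ((Fin.last n).castSucc.castSucc) = x) :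
    (f.truncate h2).truncate h = f.truncate2 h :=
  Subtype.ext rfl

lemma remove_castSucc_cond {n : ℕ} {z : P} (f : PChain P (n + 2) z) (i : Fin (n + 1)) :
    (f.remove (Fin.castSucc i)).1 (Fin.castSucc (Fin.last n)) =
      f.1 (Fin.castSucc (Fin.last (n + 1))) := by
  show f.1 ((Fin.castSucc (Fin.castSucc i)).succAbove (Fin.castSucc (Fin.last n))) = _
  rw [Fin.castSucc_succAbove_castSucc]
  congr 1
  rw [Fin.succAbove_of_le_castSucc _ _
    (Fin.castSucc_le_castSucc_iff.mpr (Fin.le_last i)), Fin.succ_last]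

lemma remove_castSucc_trunc {n : ℕ} {z x : P} (f : PChain P (n + 2) z) (i : Fin (n + 1))
    (h2 : f.1 (Fin.castSucc (Fin.last (n + 1))) = x) :
    (f.remove (Fin.castSucc i)).truncate ((remove_castSucc_cond f i).trans h2) =
      (f.truncate h2).remove i :=
  Subtype.ext (funext fun j => congrArg f.1 Fin.castSucc_succAbove_castSucc)

end Aux
open Classical in
lemma chain_key (K : Type*) [CommRing K] {P : Type*} [PartialOrder P] [Fintype P]
    (x z : P) (n : ℕ) :
    (∑ y : P, if x < y ∧ y < z then (bmap K x y n) ∘ₗ (bmap K y z (n + 1)) else 0)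
      = -((bmap K x z n) ∘ₗ bdry K (n + 1) z + (bdry K n x) ∘ₗ bmap K x z (n + 1)) := by
  classical
  apply Finsupp.lhom_ext'
  intro f
  apply LinearMap.ext_ring
  simp only [LinearMap.comp_apply, Finsupp.lsingle_apply, LinearMap.sum_apply,
    LinearMap.neg_apply, LinearMap.add_apply]
  have hLHS : ∀ y : P,
      (if x < y ∧ y < z then (bmap K x y n) ∘ₗ (bmap K y z (n + 1)) else 0)
          (Finsupp.single f 1)
        = if x < y ∧ y < z then
            bmap K x y n (bmap K y z (n + 1) (Finsupp.single f 1)) else 0 := by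
    intro y
    split_ifs <;> simp
  simp only [hLHS]
  by_cases hx1 : f.1 ((Fin.last n).castSucc.castSucc) = x
  · -- Case A
    have hlt : x < f.1 (Fin.castSucc (Fin.last (n + 1))) := by
      have := f.2.1 (Fin.castSucc_lt_castSucc_iff.mpr
        (Fin.castSucc_lt_last (Fin.last n)))
      rwa [hx1] at this
    have hx2 : ¬ f.1 (Fin.castSucc (Fin.last (n + 1))) = x := fun h =>
      absurd (h ▸ hlt) (lt_irrefl x)
    have hz : f.1 (Fin.castSucc (Fin.last (n + 1))) < z := by
      have := f.2.1 (Fin.castSucc_lt_last (Fin.last (n + 1)))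
      rwa [f.2.2] at this
    rw [Finset.sum_eq_single_of_mem (f.1 (Fin.castSucc (Fin.last (n + 1))))
      (Finset.mem_univ _) ?_]
    · rw [if_pos ⟨hlt, hz⟩, bmap_single_pos _ _ _ f rfl, map_smul,
        bmap_single_pos x _ n _ hx1, trunc_trunc f rfl hx1,
        bmap_single_neg x z (n + 1) f hx2, map_zero,
        bdry_single, map_sum]
      have hsm : ∀ i : Fin (n + 2),
          bmap K x z n (((-1 : K) ^ (i : ℕ)) • Finsupp.single (f.remove i) 1)
            = ((-1 : K) ^ (i : ℕ)) • bmap K x z n (Finsupp.single (f.remove i) 1) := by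
        intro i; rw [map_smul]
      rw [Finset.sum_congr rfl fun i _ => hsm i, Fin.sum_univ_castSucc]
      have h0 : ∀ i : Fin (n + 1),
          bmap K x z n (Finsupp.single (f.remove (Fin.castSucc i)) 1) = 0 := fun i =>
        bmap_single_neg x z n _ (fun h => hx2 ((remove_castSucc_cond f i).symm.trans h))
      simp only [h0, smul_zero, Finset.sum_const_zero, zero_add]
      rw [bmap_single_pos x z n _ ((remove_last_cond f).trans hx1),
        remove_last_trunc f hx1]
      rw [smul_smul, smul_smul, Fin.val_last, add_zero, ← neg_smul]
      congr 1
      ring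
    · intro y _ hy
      rw [bmap_single_neg y z (n + 1) f (fun h => hy (h ▸ rfl)), map_zero,
        ite_self]
  · by_cases hx2 : f.1 (Fin.castSucc (Fin.last (n + 1))) = x
    · -- Case B
      rw [Finset.sum_eq_zero ?_, bmap_single_pos x z (n + 1) f hx2, map_smul,
        bdry_single, bdry_single, map_sum]
      · have hsm : ∀ i : Fin (n + 2),
            bmap K x z n (((-1 : K) ^ (i : ℕ)) • Finsupp.single (f.remove i) 1)
              = ((-1 : K) ^ (i : ℕ)) • bmap K x z n (Finsupp.single (f.remove i) 1) := by
          intro i; rw [map_smul]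
        rw [Finset.sum_congr rfl fun i _ => hsm i, Fin.sum_univ_castSucc]
        rw [bmap_single_neg x z n _ (fun h => hx1 ((remove_last_cond f).symm.trans h)),
          smul_zero, add_zero]
        have h1 : ∀ i : Fin (n + 1),
            bmap K x z n (Finsupp.single (f.remove (Fin.castSucc i)) 1)
              = ((-1 : K) ^ (n + 1)) • Finsupp.single ((f.truncate hx2).remove i) 1 := by
          intro i
          rw [bmap_single_pos x z n _ ((remove_castSucc_cond f i).trans hx2),
            remove_castSucc_trunc f i hx2]
        simp only [h1, Fin.coe_castSucc, Finsupp.smul_single, smul_smul,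
          Finset.smul_sum]
        rw [← Finset.sum_add_distrib]
        symm
        rw [neg_eq_zero]
        apply Finset.sum_eq_zero
        intro i _
        have hc : ((-1 : K) ^ (i : ℕ) * (-1) ^ (n + 1)) • (1 : K)
              + ((-1 : K) ^ (n + 1 + 1) * (-1) ^ (i : ℕ)) • (1 : K) = 0 := by
          simp only [smul_eq_mul, mul_one]; ring
        rw [← Finsupp.single_add, hc, Finsupp.single_zero]
      · intro y _
        by_cases hyw : f.1 (Fin.castSucc (Fin.last (n + 1))) = y
        · rw [if_neg fun hp => absurd hp.1 (by rw [hyw.symm.trans hx2]; exact lt_irrefl x)]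
        · rw [bmap_single_neg y z (n + 1) f hyw, map_zero, ite_self]
    · -- Case C
      rw [Finset.sum_eq_zero ?_]
      · rw [bmap_single_neg x z (n + 1) f hx2, map_zero, add_zero,
          bdry_single, map_sum]
        have h0 : ∀ i : Fin (n + 2),
            bmap K x z n (((-1 : K) ^ (i : ℕ)) • Finsupp.single (f.remove i) 1) = 0 := by
          intro i
          rw [map_smul]
          rcases Fin.eq_castSucc_or_eq_last i with ⟨j, rfl⟩ | rfl
          · rw [bmap_single_neg x z n _
              (fun h => hx2 ((remove_castSucc_cond f j).symm.trans h)), smul_zero]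
          · rw [bmap_single_neg x z n _
              (fun h => hx1 ((remove_last_cond f).symm.trans h)), smul_zero]
        simp only [h0, Finset.sum_const_zero, neg_zero]
      · intro y _
        by_cases hyw : f.1 (Fin.castSucc (Fin.last (n + 1))) = y
        · rw [bmap_single_pos y z (n + 1) f hyw, map_smul,
            bmap_single_neg x y n _ (fun h => hx1 h), smul_zero, ite_self]
        · rw [bmap_single_neg y z (n + 1) f hyw, map_zero, ite_self]
/-- Let `x < z` in a finite poset `P` be such that every `y` strictly between
`x` and `z` satisfies `x ⋖ y` and `y ⋖ z`.  Then
`Σ_{x<y<z} b_y^z ∘ b_x^y = -(d ∘ b_x^z + b_x^z ∘ d)` as maps `C^n(x) → C^{n+2}(z)` in every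
degree; in particular the morphism of complexes `Σ_{x<y<z} b_y^z ∘ b_x^y : C^•(x) → C^{•+2}(z)`
is chain homotopic to zero.  Here `Module.Dual K (CC K P n w)` models `C^{n+1}(w)`, the
cochain-level `b` maps are the transposes of the chain-level ones, and `d` is the transpose
of `∂`; the remaining degree is trivial since `C^0(x) = 0`. -/
theorem statement_6 (K : Type*) [CommRing K] (P : Type*) [PartialOrder P] [Fintype P]
    (x z : P) (hxz : x < z) (hcov : ∀ y : P, x < y → y < z → (x ⋖ y ∧ y ⋖ z)) :
    ∀ n : ℕ,
      (∑ᶠ (y : P) (_ : x < y ∧ y < z),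
          (bmap K y z (n + 1)).dualMap ∘ₗ (bmap K x y n).dualMap)
        = -((bdry K (n + 1) z).dualMap ∘ₗ (bmap K x z n).dualMap
            + (bmap K x z (n + 1)).dualMap ∘ₗ (bdry K n x).dualMap) := by
  intro n
  classical
  have h1 : (∑ᶠ (y : P) (_ : x < y ∧ y < z),
        (bmap K y z (n + 1)).dualMap ∘ₗ (bmap K x y n).dualMap)
      = ∑ y : P, Module.Dual.transpose (R := K)
          (if x < y ∧ y < z then (bmap K x y n) ∘ₗ (bmap K y z (n + 1)) else 0) := by
    rw [finsum_eq_sum_of_fintype]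
    refine Finset.sum_congr rfl fun y _ => ?_
    rw [finsum_eq_if]
    split_ifs with h
    · rw [LinearMap.dualMap_comp_dualMap]; rfl
    · exact (map_zero _).symm
  rw [h1, ← map_sum, chain_key K x z n]
  rw [show (-(bmap K x z n ∘ₗ bdry K (n + 1) z + bdry K n x ∘ₗ bmap K x z (n + 1)))
        = ((-1 : K) • ((bmap K x z n ∘ₗ bdry K (n + 1) z)
            + (bdry K n x ∘ₗ bmap K x z (n + 1))))
      from by exact (neg_one_smul K (M := CC K P (n + 1 + 1) z →ₗ[K] CC K P n x) _).symm,
    map_smul, map_add, LinearMap.dualMap_comp_dualMap,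
    LinearMap.dualMap_comp_dualMap]
  exact neg_one_smul K (M := Module.Dual K (CC K P n x) →ₗ[K] Module.Dual K (CC K P (n + 1 + 1) z)) _
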